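/- (Two-variable Schur complement identity implied by outer factorization.) Let K = {0,…,n₁}×{0,…,n₂} and Q(z) = Σ_{k∈K-K} Q_k z^k ≥ 0 on 𝕋², with T_Q the associated positive Toeplitz operator on H²_H(𝔻²). Suppose Q(z) = P(z)*P(z) on 𝕋² where P(z) = Σ_{k∈K} P_k z^k satisfies the range conditions ran(Π_{ℕ₀²∖K̃} T_P Π_{K̃}) ⊆ closure(ran Π_{ℕ₀²∖K̃} T_P Π_{ℕ₀²∖K̃}) for K̃ ∈ {{0,…,n₁-1}×{0,…,n₂-1}, {0,…,n₁}×{0,…,n₂-1}, {0,…,n₁-1}×{0,…,n₂}, K∖{(n₁,n₂)}, K}. Then S(T_Q; K∖{(n₁,n₂)}) = S₁ + S₂ - S₀, where S₁ = S(T_Q; {0,…,n₁-1}×{0,…,n₂}), S₂ = S(T_Q; {0,…,n₁}×{0,…,n₂-1}), S₀ = S(T_Q; {0,…,n₁-1}×{0,…,n₂-1}). -/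

import Mathlib

/-!
Since `Q = P^* P` with `P` supported in `K ⊆ ℕ₀²`, we have `T_Q = T_P^* T_P` with `T_P` lower
triangular for the product order. Hence for every lower set `Λ ⊆ K` satisfying the range condition
the Schur complement is explicit: `S(T_Q; Λ) = Π_Λ T_P^* Π_Λ T_P Π_Λ`. It dominates this operator
because the rows of `T_P v` indexed by `Λ` only see `Π_Λ v`; conversely, the range condition gives
`g` supported off `Λ` making the rows of `T_P (v - g)` outside `Λ` arbitrarily small. The identity
is then inclusion–exclusion for `Λ₁ = {0,…,n₁-1}×{0,…,n₂}` and `Λ₂ = {0,…,n₁}×{0,…,n₂-1}`, whose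
union is `K ∖ {(n₁,n₂)}` and whose intersection is `{0,…,n₁-1}×{0,…,n₂-1}`.
-/

open scoped InnerProductSpace
open ContinuousLinearMap

section

variable {H : Type*} [NormedAddCommGroup H] [InnerProductSpace ℂ H] [CompleteSpace H]

/-- The square box `{0,…,N-1} × {0,…,N-1}` in `ℕ²`. -/
def box2 (N : ℕ) : Finset (ℕ × ℕ) := Finset.range N ×ˢ Finset.range N

/-- The quadratic form of the two-variable block Toeplitz matrix
`(Q_{i-j})_{i,j ∈ ℕ²}` on vectors supported in `box2 N`. -/
noncomputable def toepQF2 (Q : ℤ × ℤ → H →L[ℂ] H) (N : ℕ) (v : ℕ × ℕ → H) : ℝ :=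
  ∑ i ∈ box2 N, ∑ j ∈ box2 N,
    (⟪Q ((i.1 : ℤ) - (j.1 : ℤ), (i.2 : ℤ) - (j.2 : ℤ)) (v j), v i⟫_ℂ).re

/-- The two-variable block Toeplitz operator `T_Q` is (hermitian and) positive
semidefinite. -/
def ToepPos2 (Q : ℤ × ℤ → H →L[ℂ] H) : Prop :=
  (∀ k : ℤ × ℤ, Q (-k) = (Q k).adjoint) ∧ ∀ N v, 0 ≤ toepQF2 Q N v

/-- The quadratic form of a block matrix supported on `Λ × Λ`. -/
noncomputable def schurQF2 (Λ : Finset (ℕ × ℕ)) (S : ℕ × ℕ → ℕ × ℕ → H →L[ℂ] H) (v : ℕ × ℕ → H) : ℝ :=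
  ∑ i ∈ Λ, ∑ j ∈ Λ, (⟪S i j (v j), v i⟫_ℂ).re

/-- `S` is the Schur complement of the positive two-variable Toeplitz operator `T_Q`
supported on rows and columns in `Λ`: the maximal positive operator matrix supported
there with `T_Q - S ≥ 0`. -/
def IsSchurToep2 (Q : ℤ × ℤ → H →L[ℂ] H) (Λ : Finset (ℕ × ℕ))
    (S : ℕ × ℕ → ℕ × ℕ → H →L[ℂ] H) : Prop :=
  (∀ i j, i ∉ Λ ∨ j ∉ Λ → S i j = 0) ∧ (∀ i j, (S i j).adjoint = S j i) ∧
    (∀ v, 0 ≤ schurQF2 Λ S v) ∧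
    (∀ (N : ℕ) (v : ℕ × ℕ → H), (∀ p, p ∉ box2 N → v p = 0) →
      schurQF2 Λ S v ≤ toepQF2 Q N v) ∧
    ∀ X : ℕ × ℕ → ℕ × ℕ → H →L[ℂ] H, (∀ i j, i ∉ Λ ∨ j ∉ Λ → X i j = 0) →
      (∀ i j, (X i j).adjoint = X j i) → (∀ v, 0 ≤ schurQF2 Λ X v) →
      (∀ (N : ℕ) (v : ℕ × ℕ → H), (∀ p, p ∉ box2 N → v p = 0) →
        schurQF2 Λ X v ≤ toepQF2 Q N v) →
      ∀ v, schurQF2 Λ X v ≤ schurQF2 Λ S v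

/-- The Toeplitz matrix `T_P = (P_{i-j})` applied to a vector supported on `Λ`. -/
def toepApply2 (P : ℤ × ℤ → H →L[ℂ] H) (Λ : Finset (ℕ × ℕ)) (v : ℕ × ℕ → H)
    (i : ℕ × ℕ) : H :=
  ∑ j ∈ Λ, P ((i.1 : ℤ) - (j.1 : ℤ), (i.2 : ℤ) - (j.2 : ℤ)) (v j)

/-- The range condition
`ran (Π_{ℕ₀²∖Λ} T_P Π_Λ) ⊆ closure (ran (Π_{ℕ₀²∖Λ} T_P Π_{ℕ₀²∖Λ}))`, expressed by
`ℓ²`-approximation. -/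
def OuterCond2 (P : ℤ × ℤ → H →L[ℂ] H) (Λ : Finset (ℕ × ℕ)) : Prop :=
  ∀ v : ℕ × ℕ → H, (∀ p, p ∉ Λ → v p = 0) → ∀ ε > 0,
    ∃ (N : ℕ) (g : ℕ × ℕ → H), (∀ p, p ∈ Λ ∨ p ∉ box2 N → g p = 0) ∧
      (∑' i : ℕ × ℕ, if i ∈ Λ then (0 : ℝ)
        else ‖toepApply2 P Λ v i - toepApply2 P (box2 N) g i‖ ^ 2) < ε

end

open Finset

section

variable {H : Type*} [NormedAddCommGroup H] [InnerProductSpace ℂ H]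

lemma mem_box2 {p : ℕ × ℕ} {N : ℕ} : p ∈ box2 N ↔ p.1 < N ∧ p.2 < N := by
  simp [box2]

lemma add_mem_box2 {N n₁ n₂ : ℕ} {i a : ℕ × ℕ} (hi : i ∈ box2 N)
    (ha : a ∈ range (n₁ + 1) ×ˢ range (n₂ + 1)) : i + a ∈ box2 (N + n₁ + n₂) := by
  simp only [mem_box2, mem_product, mem_range, Prod.fst_add, Prod.snd_add] at hi ha ⊢
  omega

lemma isLowerSet_range_prod_range (m k : ℕ) :
    IsLowerSet (↑(range m ×ˢ range k) : Set (ℕ × ℕ)) := by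
  rw [coe_product, coe_range, coe_range]
  exact (isLowerSet_Iio m).prod (isLowerSet_Iio k)

lemma norm_sum_sq_eq_sum_sum_re_inner {ι : Type*} (s : Finset ι) (f : ι → H) :
    ‖∑ j ∈ s, f j‖ ^ 2 = ∑ i ∈ s, ∑ j ∈ s, (⟪f j, f i⟫_ℂ).re := by
  rw [norm_sq_eq_re_inner (𝕜 := ℂ), RCLike.re_to_complex]
  simp only [sum_inner, inner_sum, Complex.re_sum]

lemma sum_norm_sum_sq_eq_sum_sum_sum_re_inner {ι κ : Type*} (B : Finset ι) (M : Finset κ)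
    (f : κ → ι → H) :
    ∑ k ∈ M, ‖∑ j ∈ B, f k j‖ ^ 2 = ∑ i ∈ B, ∑ j ∈ B, ∑ k ∈ M, (⟪f k j, f k i⟫_ℂ).re := by
  simp only [norm_sum_sq_eq_sum_sum_re_inner]
  rw [sum_comm]
  exact sum_congr rfl fun _ _ => sum_comm

lemma schurQF2_congr {Λ : Finset (ℕ × ℕ)} (S : ℕ × ℕ → ℕ × ℕ → H →L[ℂ] H)
    {v w : ℕ × ℕ → H} (h : ∀ p ∈ Λ, v p = w p) :
    schurQF2 Λ S v = schurQF2 Λ S w :=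
  sum_congr rfl fun i hi => sum_congr rfl fun j hj => by rw [h i hi, h j hj]

lemma sum_sum_inner_single {Λ : Finset (ℕ × ℕ)} (S : ℕ × ℕ → ℕ × ℕ → H →L[ℂ] H)
    {a b : ℕ × ℕ} (ha : a ∈ Λ) (hb : b ∈ Λ) (x y : H) :
    ∑ i ∈ Λ, ∑ j ∈ Λ, ⟪S i j ((Pi.single b y : ℕ × ℕ → H) j), (Pi.single a x : ℕ × ℕ → H) i⟫_ℂ =
      ⟪S a b y, x⟫_ℂ := by
  rw [sum_eq_single_of_mem a ha fun i _ hi => by simp [hi],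
    sum_eq_single_of_mem b hb fun j _ hj => by simp [hj]]
  simp

def toepEntry2 (P : ℤ × ℤ → H →L[ℂ] H) (k j : ℕ × ℕ) : H →L[ℂ] H :=
  P ((k.1 : ℤ) - (j.1 : ℤ), (k.2 : ℤ) - (j.2 : ℤ))

def SupportedInBox2 (n₁ n₂ : ℕ) (P : ℤ × ℤ → H →L[ℂ] H) : Prop :=
  ∀ a : ℤ × ℤ, ¬(0 ≤ a.1 ∧ a.1 ≤ (n₁ : ℤ) ∧ 0 ≤ a.2 ∧ a.2 ≤ (n₂ : ℤ)) → P a = 0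

variable {P : ℤ × ℤ → H →L[ℂ] H} {n₁ n₂ : ℕ}

lemma toepApply2_eq_sum_toepEntry2 (B : Finset (ℕ × ℕ)) (v : ℕ × ℕ → H) (k : ℕ × ℕ) :
    toepApply2 P B v k = ∑ j ∈ B, toepEntry2 P k j (v j) :=
  rfl

lemma toepEntry2_eq_zero (hP : SupportedInBox2 n₁ n₂ P) {k j : ℕ × ℕ}
    (h : ¬(j ≤ k ∧ k.1 ≤ j.1 + n₁ ∧ k.2 ≤ j.2 + n₂)) : toepEntry2 P k j = 0 := by
  refine hP _ fun ⟨h₁, h₂, h₃, h₄⟩ => h ⟨Prod.le_def.2 ⟨?_, ?_⟩, ?_, ?_⟩ <;>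
    dsimp only at * <;> omega

lemma toepEntry2_eq_zero_of_not_le (hP : SupportedInBox2 n₁ n₂ P) {k j : ℕ × ℕ}
    (h : ¬j ≤ k) : toepEntry2 P k j = 0 :=
  toepEntry2_eq_zero hP fun h' => h h'.1

lemma toepApply2_sub (B : Finset (ℕ × ℕ)) (v g : ℕ × ℕ → H) (k : ℕ × ℕ) :
    toepApply2 P B (v - g) k = toepApply2 P B v k - toepApply2 P B g k := by
  simp only [toepApply2_eq_sum_toepEntry2, Pi.sub_apply, map_sub, sum_sub_distrib]

lemma toepApply2_of_subset {B C : Finset (ℕ × ℕ)} (hBC : B ⊆ C) {v : ℕ × ℕ → H}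
    (hv : ∀ p ∉ B, v p = 0) (k : ℕ × ℕ) : toepApply2 P C v k = toepApply2 P B v k :=
  (sum_subset hBC fun j _ hj => by rw [hv j hj, map_zero]).symm

lemma toepApply2_eq_of_isLowerSet (hP : SupportedInBox2 n₁ n₂ P) {Λ B : Finset (ℕ × ℕ)}
    (hΛ : IsLowerSet (Λ : Set (ℕ × ℕ))) {v : ℕ × ℕ → H} (hv : ∀ p ∉ B, v p = 0)
    {k : ℕ × ℕ} (hk : k ∈ Λ) : toepApply2 P B v k = toepApply2 P Λ v k := by
  rw [← toepApply2_of_subset (subset_union_left (s₂ := Λ)) hv,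
    toepApply2_eq_sum_toepEntry2, toepApply2_eq_sum_toepEntry2]
  exact (sum_subset subset_union_right fun j _ hj => by
    rw [toepEntry2_eq_zero_of_not_le hP fun hjk => hj (hΛ hjk hk),
      zero_apply]).symm

lemma toepApply2_box2_eq_zero (hP : SupportedInBox2 n₁ n₂ P) {N : ℕ} {k : ℕ × ℕ}
    (hk : k ∉ box2 (N + n₁ + n₂)) (v : ℕ × ℕ → H) : toepApply2 P (box2 N) v k = 0 :=
  sum_eq_zero fun j hj => by
    rw [mem_box2] at hj
    have hfar : ¬(j ≤ k ∧ k.1 ≤ j.1 + n₁ ∧ k.2 ≤ j.2 + n₂) := fun ⟨_, h₁, h₂⟩ =>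
      hk (mem_box2.2 (by omega))
    show toepEntry2 P k j (v j) = 0
    rw [toepEntry2_eq_zero hP hfar, zero_apply]

variable [CompleteSpace H]

lemma schurQF2_add {Λ : Finset (ℕ × ℕ)} {S : ℕ × ℕ → ℕ × ℕ → H →L[ℂ] H}
    (hS : ∀ i j, (S i j).adjoint = S j i) (v w : ℕ × ℕ → H) :
    schurQF2 Λ S (v + w) = schurQF2 Λ S v + schurQF2 Λ S w +
      2 * (∑ i ∈ Λ, ∑ j ∈ Λ, ⟪S i j (w j), v i⟫_ℂ).re := by
  have hswap : ∑ i ∈ Λ, ∑ j ∈ Λ, (⟪S i j (v j), w i⟫_ℂ).re =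
      ∑ i ∈ Λ, ∑ j ∈ Λ, (⟪S i j (w j), v i⟫_ℂ).re := by
    rw [sum_comm]
    refine sum_congr rfl fun j _ => sum_congr rfl fun i _ => ?_
    rw [← hS i j, ContinuousLinearMap.adjoint_inner_left, ← inner_conj_symm, Complex.conj_re]
  simp only [schurQF2, Pi.add_apply, map_add, inner_add_left, inner_add_right, Complex.add_re,
    sum_add_distrib, Complex.re_sum] at hswap ⊢
  linarith

lemma eq_of_schurQF2_eq {Λ : Finset (ℕ × ℕ)} {S T : ℕ × ℕ → ℕ × ℕ → H →L[ℂ] H}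
    (hS0 : ∀ i j, i ∉ Λ ∨ j ∉ Λ → S i j = 0) (hT0 : ∀ i j, i ∉ Λ ∨ j ∉ Λ → T i j = 0)
    (hS : ∀ i j, (S i j).adjoint = S j i) (hT : ∀ i j, (T i j).adjoint = T j i)
    (h : ∀ v, schurQF2 Λ S v = schurQF2 Λ T v) : S = T := by
  have hform : ∀ v w : ℕ × ℕ → H, (∑ i ∈ Λ, ∑ j ∈ Λ, ⟪S i j (w j), v i⟫_ℂ).re =
      (∑ i ∈ Λ, ∑ j ∈ Λ, ⟪T i j (w j), v i⟫_ℂ).re := fun v w => by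
    have hSvw := schurQF2_add (Λ := Λ) hS v w
    have hTvw := schurQF2_add (Λ := Λ) hT v w
    rw [h, h, h] at hSvw
    linarith
  funext a b
  by_cases hab : a ∈ Λ ∧ b ∈ Λ
  · ext y
    obtain ⟨d, hd⟩ : ∃ d, d = S a b y - T a b y := ⟨_, rfl⟩
    have hy := hform (Pi.single a d) (Pi.single b y)
    rw [sum_sum_inner_single S hab.1 hab.2, sum_sum_inner_single T hab.1 hab.2] at hy
    have hd0 : ‖d‖ ^ 2 = 0 := by
      rw [norm_sq_eq_re_inner (𝕜 := ℂ), RCLike.re_to_complex]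
      nth_rw 1 [hd]
      rw [inner_sub_left, Complex.sub_re, hy, sub_self]
    rw [← sub_eq_zero, ← hd]
    simpa using hd0
  · rw [not_and_or] at hab
    rw [hS0 a b hab, hT0 a b hab]

/-- The compression of `T_P^* Π_Λ T_P` to `Λ × Λ`. -/
noncomputable def gramToep2 (P : ℤ × ℤ → H →L[ℂ] H) (Λ : Finset (ℕ × ℕ)) (a b : ℕ × ℕ) :
    H →L[ℂ] H :=
  ∑ k ∈ Λ, (toepEntry2 P k a).adjoint ∘L toepEntry2 P k b

lemma gramToep2_adjoint (Λ : Finset (ℕ × ℕ)) (a b : ℕ × ℕ) :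
    (gramToep2 P Λ a b).adjoint = gramToep2 P Λ b a := by
  simp only [gramToep2, map_sum, ContinuousLinearMap.adjoint_comp,
    ContinuousLinearMap.adjoint_adjoint]

lemma gramToep2_eq_zero (hP : SupportedInBox2 n₁ n₂ P) {Λ : Finset (ℕ × ℕ)}
    (hΛ : IsLowerSet (Λ : Set (ℕ × ℕ))) {a b : ℕ × ℕ} (h : a ∉ Λ ∨ b ∉ Λ) :
    gramToep2 P Λ a b = 0 := by
  refine sum_eq_zero fun k hk => ?_
  rcases h with h | h
  · rw [toepEntry2_eq_zero_of_not_le hP fun hak => h (hΛ hak hk),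
      ContinuousLinearMap.adjoint.map_zero, ContinuousLinearMap.zero_comp]
  · rw [toepEntry2_eq_zero_of_not_le hP fun hbk => h (hΛ hbk hk),
      ContinuousLinearMap.comp_zero]

lemma schurQF2_gramToep2 (Λ : Finset (ℕ × ℕ)) (v : ℕ × ℕ → H) :
    schurQF2 Λ (gramToep2 P Λ) v = ∑ k ∈ Λ, ‖toepApply2 P Λ v k‖ ^ 2 := by
  simp only [toepApply2_eq_sum_toepEntry2, sum_norm_sum_sq_eq_sum_sum_sum_re_inner, schurQF2,
    gramToep2, _root_.sum_apply, sum_inner, Complex.re_sum,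
    ContinuousLinearMap.comp_apply, ContinuousLinearMap.adjoint_inner_left]

lemma gramToep2_union_add_inter (Λ₁ Λ₂ : Finset (ℕ × ℕ)) :
    gramToep2 P (Λ₁ ∪ Λ₂) + gramToep2 P (Λ₁ ∩ Λ₂) = gramToep2 P Λ₁ + gramToep2 P Λ₂ := by
  funext a b
  exact sum_union_inter

/-- Coefficientwise form of `Q(z) = P(z)^* P(z)` on `𝕋²`. -/
def IsFactorization2 (n₁ n₂ : ℕ) (Q P : ℤ × ℤ → H →L[ℂ] H) : Prop :=
  ∀ d : ℤ × ℤ,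
    Q d = ∑ a ∈ Finset.range (n₁ + 1) ×ˢ Finset.range (n₂ + 1),
      (P ((a.1 : ℤ), (a.2 : ℤ))).adjoint ∘L P ((a.1 : ℤ) + d.1, (a.2 : ℤ) + d.2)

variable {Q : ℤ × ℤ → H →L[ℂ] H}

lemma toepQF2_eq_sum_norm_sq (hP : SupportedInBox2 n₁ n₂ P) (hQP : IsFactorization2 n₁ n₂ Q P)
    {N : ℕ} {M : Finset (ℕ × ℕ)}
    (hM : ∀ i ∈ box2 N, ∀ a ∈ range (n₁ + 1) ×ˢ range (n₂ + 1), i + a ∈ M) (v : ℕ × ℕ → H) :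
    toepQF2 Q N v = ∑ k ∈ M, ‖toepApply2 P (box2 N) v k‖ ^ 2 := by
  have hentry : ∀ i ∈ box2 N, ∀ j,
      (⟪Q ((i.1 : ℤ) - (j.1 : ℤ), (i.2 : ℤ) - (j.2 : ℤ)) (v j), v i⟫_ℂ).re =
        ∑ k ∈ M, (⟪toepEntry2 P k j (v j), toepEntry2 P k i (v i)⟫_ℂ).re := by
    intro i hi j
    have hsub : (range (n₁ + 1) ×ˢ range (n₂ + 1)).map (addLeftEmbedding i) ⊆ M := fun k hk => by
      obtain ⟨a, ha, rfl⟩ := mem_map.1 hk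
      exact hM i hi a ha
    rw [hQP, _root_.sum_apply, sum_inner, Complex.re_sum, ← sum_subset hsub, sum_map]
    · refine sum_congr rfl fun a _ => ?_
      have hi' : ((((i + a).1 : ℕ) : ℤ) - i.1, (((i + a).2 : ℕ) : ℤ) - i.2) =
          ((a.1 : ℤ), (a.2 : ℤ)) :=
        Prod.ext (by rw [Prod.fst_add]; push_cast; ring) (by rw [Prod.snd_add]; push_cast; ring)
      have hj' : ((((i + a).1 : ℕ) : ℤ) - j.1, (((i + a).2 : ℕ) : ℤ) - j.2) =
          ((a.1 : ℤ) + (i.1 - j.1), (a.2 : ℤ) + (i.2 - j.2)) :=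
        Prod.ext (by rw [Prod.fst_add]; push_cast; ring) (by rw [Prod.snd_add]; push_cast; ring)
      rw [comp_apply, adjoint_inner_left, addLeftEmbedding_apply, toepEntry2, toepEntry2, hi', hj']
    · intro k _ hk
      have hfar : ¬(i ≤ k ∧ k.1 ≤ i.1 + n₁ ∧ k.2 ≤ i.2 + n₂) := fun ⟨hik, h₁, h₂⟩ => by
        rw [Prod.le_def] at hik
        refine hk (mem_map.2 ⟨(k.1 - i.1, k.2 - i.2), ?_, Prod.ext ?_ ?_⟩)
        · simp only [mem_product, mem_range]
          omega
        all_goals simp only [addLeftEmbedding_apply, Prod.fst_add, Prod.snd_add]; omega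
      rw [toepEntry2_eq_zero hP hfar, zero_apply, inner_zero_right, Complex.zero_re]
  calc toepQF2 Q N v
      = ∑ i ∈ box2 N, ∑ j ∈ box2 N, ∑ k ∈ M,
          (⟪toepEntry2 P k j (v j), toepEntry2 P k i (v i)⟫_ℂ).re :=
        sum_congr rfl fun i hi => sum_congr rfl fun j _ => hentry i hi j
    _ = ∑ k ∈ M, ‖toepApply2 P (box2 N) v k‖ ^ 2 :=
        (sum_norm_sum_sq_eq_sum_sum_sum_re_inner _ _ _).symm

lemma schurQF2_gramToep2_le_toepQF2 (hP : SupportedInBox2 n₁ n₂ P)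
    (hQP : IsFactorization2 n₁ n₂ Q P) {Λ : Finset (ℕ × ℕ)} (hΛ : IsLowerSet (Λ : Set (ℕ × ℕ)))
    {N : ℕ} {v : ℕ × ℕ → H} (hv : ∀ p ∉ box2 N, v p = 0) :
    schurQF2 Λ (gramToep2 P Λ) v ≤ toepQF2 Q N v := by
  rw [schurQF2_gramToep2, toepQF2_eq_sum_norm_sq hP hQP (M := box2 (N + n₁ + n₂) ∪ Λ)
    fun i hi a ha => mem_union_left _ (add_mem_box2 hi ha)]
  calc ∑ k ∈ Λ, ‖toepApply2 P Λ v k‖ ^ 2 = ∑ k ∈ Λ, ‖toepApply2 P (box2 N) v k‖ ^ 2 :=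
        sum_congr rfl fun k hk => by rw [toepApply2_eq_of_isLowerSet hP hΛ hv hk]
    _ ≤ _ := sum_le_sum_of_subset_of_nonneg subset_union_right fun _ _ _ => by positivity

lemma toepQF2_sub_eq (hP : SupportedInBox2 n₁ n₂ P) (hQP : IsFactorization2 n₁ n₂ Q P)
    {Λ : Finset (ℕ × ℕ)} (hΛ : IsLowerSet (Λ : Set (ℕ × ℕ))) {N N' : ℕ}
    (hΛN' : Λ ⊆ box2 N') (hNN' : box2 N ⊆ box2 N') {v g : ℕ × ℕ → H}
    (hv : ∀ p ∉ Λ, v p = 0) (hgΛ : ∀ p ∈ Λ, g p = 0) (hgN : ∀ p ∉ box2 N, g p = 0) :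
    toepQF2 Q N' (v - g) = ∑ k ∈ Λ, ‖toepApply2 P Λ v k‖ ^ 2 +
      ∑' k, if k ∈ Λ then (0 : ℝ)
        else ‖toepApply2 P Λ v k - toepApply2 P (box2 N) g k‖ ^ 2 := by
  have hΛM : Λ ⊆ box2 (N' + n₁ + n₂) := fun p hp => by
    have := hΛN' hp
    rw [mem_box2] at this ⊢
    omega
  have hT : ∀ k, toepApply2 P (box2 N') (v - g) k =
      toepApply2 P Λ v k - toepApply2 P (box2 N) g k := fun k => by
    rw [toepApply2_sub, toepApply2_of_subset hΛN' hv, toepApply2_of_subset hNN' hgN]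
  -- `T_P` is lower triangular and `g` vanishes on the lower set `Λ`.
  have hTg : ∀ k ∈ Λ, toepApply2 P (box2 N) g k = 0 := fun k hk => by
    rw [toepApply2_eq_of_isLowerSet hP hΛ hgN hk]
    exact sum_eq_zero fun j hj => by rw [hgΛ j hj, map_zero]
  set F : ℕ × ℕ → ℝ := fun k => if k ∈ Λ then (0 : ℝ)
    else ‖toepApply2 P Λ v k - toepApply2 P (box2 N) g k‖ ^ 2
  have hsplit : ∀ k, ‖toepApply2 P (box2 N') (v - g) k‖ ^ 2 =
      (if k ∈ Λ then ‖toepApply2 P Λ v k‖ ^ 2 else 0) + F k := fun k => by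
    by_cases hk : k ∈ Λ <;> simp [F, hk, hT, hTg]
  have hF : ∀ k ∉ box2 (N' + n₁ + n₂), F k = 0 := fun k hk => by
    simp only [F, if_neg fun h => hk (hΛM h), ← hT, toepApply2_box2_eq_zero hP hk, norm_zero]
    norm_num
  rw [toepQF2_eq_sum_norm_sq hP hQP fun i hi a ha => add_mem_box2 hi ha, tsum_eq_sum hF]
  simp only [hsplit, sum_add_distrib, sum_ite_mem, inter_eq_right.2 hΛM]

lemma schurQF2_le_sum_norm_sq_add (hP : SupportedInBox2 n₁ n₂ P)
    (hQP : IsFactorization2 n₁ n₂ Q P) {Λ : Finset (ℕ × ℕ)} (hΛ : IsLowerSet (Λ : Set (ℕ × ℕ)))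
    (hΛK : Λ ⊆ range (n₁ + 1) ×ˢ range (n₂ + 1)) (houter : OuterCond2 P Λ)
    {S : ℕ × ℕ → ℕ × ℕ → H →L[ℂ] H}
    (hS : ∀ N v, (∀ p ∉ box2 N, v p = 0) → schurQF2 Λ S v ≤ toepQF2 Q N v)
    {v : ℕ × ℕ → H} (hv : ∀ p ∉ Λ, v p = 0) {ε : ℝ} (hε : 0 < ε) :
    schurQF2 Λ S v ≤ ∑ k ∈ Λ, ‖toepApply2 P Λ v k‖ ^ 2 + ε := by
  obtain ⟨N, g, hg, hgε⟩ := houter v hv ε hε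
  have hgΛ : ∀ p ∈ Λ, g p = 0 := fun p hp => hg p (Or.inl hp)
  have hgN : ∀ p ∉ box2 N, g p = 0 := fun p hp => hg p (Or.inr hp)
  have hΛN' : Λ ⊆ box2 (N + n₁ + n₂ + 1) := fun p hp => by
    have := hΛK hp
    simp only [mem_product, mem_range] at this
    exact mem_box2.2 ⟨by omega, by omega⟩
  have hNN' : box2 N ⊆ box2 (N + n₁ + n₂ + 1) := fun p hp => by
    rw [mem_box2] at hp ⊢
    omega
  calc schurQF2 Λ S v = schurQF2 Λ S (v - g) :=
        schurQF2_congr S fun p hp => by rw [Pi.sub_apply, hgΛ p hp, sub_zero]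
    _ ≤ toepQF2 Q (N + n₁ + n₂ + 1) (v - g) := hS _ (v - g) fun p hp => by
        rw [Pi.sub_apply, hv p fun h => hp (hΛN' h), hgN p fun h => hp (hNN' h), sub_zero]
    _ ≤ _ := by
        rw [toepQF2_sub_eq hP hQP hΛ hΛN' hNN' hv hgΛ hgN]
        linarith

lemma schur_eq_gramToep2 (hP : SupportedInBox2 n₁ n₂ P) (hQP : IsFactorization2 n₁ n₂ Q P)
    {Λ : Finset (ℕ × ℕ)} (hΛ : IsLowerSet (Λ : Set (ℕ × ℕ)))
    (hΛK : Λ ⊆ range (n₁ + 1) ×ˢ range (n₂ + 1)) (houter : OuterCond2 P Λ)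
    {S : ℕ × ℕ → ℕ × ℕ → H →L[ℂ] H} (hS : IsSchurToep2 Q Λ S) : S = gramToep2 P Λ := by
  obtain ⟨hS0, hSadj, -, hSdom, hSmax⟩ := hS
  have hG0 : ∀ i j, i ∉ Λ ∨ j ∉ Λ → gramToep2 P Λ i j = 0 := fun _ _ =>
    gramToep2_eq_zero hP hΛ
  refine eq_of_schurQF2_eq hS0 hG0 hSadj (gramToep2_adjoint Λ) fun v => le_antisymm ?_ ?_
  · set w : ℕ × ℕ → H := fun p => if p ∈ Λ then v p else 0
    have hvw : ∀ p ∈ Λ, v p = w p := fun p hp => (if_pos hp).symm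
    rw [schurQF2_congr S hvw, schurQF2_congr _ hvw, schurQF2_gramToep2]
    exact le_of_forall_pos_le_add fun ε hε =>
      schurQF2_le_sum_norm_sq_add hP hQP hΛ hΛK houter hSdom (fun p hp => if_neg hp) hε
  · refine hSmax _ hG0 (gramToep2_adjoint Λ) (fun u => ?_) (fun N u hu =>
      schurQF2_gramToep2_le_toepQF2 hP hQP hΛ hu) v
    rw [schurQF2_gramToep2]
    positivity

lemma schurToep2_union_eq_add_sub_inter (hP : SupportedInBox2 n₁ n₂ P)
    (hQP : IsFactorization2 n₁ n₂ Q P) {Λ₁ Λ₂ : Finset (ℕ × ℕ)}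
    (hΛ₁ : IsLowerSet (Λ₁ : Set (ℕ × ℕ))) (hΛ₂ : IsLowerSet (Λ₂ : Set (ℕ × ℕ)))
    (hΛ₁K : Λ₁ ⊆ range (n₁ + 1) ×ˢ range (n₂ + 1))
    (hΛ₂K : Λ₂ ⊆ range (n₁ + 1) ×ˢ range (n₂ + 1))
    (ho₁ : OuterCond2 P Λ₁) (ho₂ : OuterCond2 P Λ₂) (ho₁₂ : OuterCond2 P (Λ₁ ∪ Λ₂))
    (ho₀ : OuterCond2 P (Λ₁ ∩ Λ₂)) {S₁ S₂ S₁₂ S₀ : ℕ × ℕ → ℕ × ℕ → H →L[ℂ] H}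
    (hS₁ : IsSchurToep2 Q Λ₁ S₁) (hS₂ : IsSchurToep2 Q Λ₂ S₂)
    (hS₁₂ : IsSchurToep2 Q (Λ₁ ∪ Λ₂) S₁₂) (hS₀ : IsSchurToep2 Q (Λ₁ ∩ Λ₂) S₀) :
    S₁₂ = S₁ + S₂ - S₀ := by
  have hunion : IsLowerSet ((Λ₁ ∪ Λ₂ : Finset (ℕ × ℕ)) : Set (ℕ × ℕ)) := by
    rw [coe_union]
    exact hΛ₁.union hΛ₂
  have hinter : IsLowerSet ((Λ₁ ∩ Λ₂ : Finset (ℕ × ℕ)) : Set (ℕ × ℕ)) := by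
    rw [coe_inter]
    exact hΛ₁.inter hΛ₂
  rw [schur_eq_gramToep2 hP hQP hΛ₁ hΛ₁K ho₁ hS₁, schur_eq_gramToep2 hP hQP hΛ₂ hΛ₂K ho₂ hS₂,
    schur_eq_gramToep2 hP hQP hunion (union_subset hΛ₁K hΛ₂K) ho₁₂ hS₁₂,
    schur_eq_gramToep2 hP hQP hinter (inter_subset_left.trans hΛ₁K) ho₀ hS₀,
    eq_sub_iff_add_eq, gramToep2_union_add_inter]

theorem two_variable_schur_identity_general (n₁ n₂ : ℕ) (Q : ℤ × ℤ → H →L[ℂ] H)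
    (P : ℤ × ℤ → H →L[ℂ] H)
    (hPsupp : ∀ a : ℤ × ℤ,
      ¬(0 ≤ a.1 ∧ a.1 ≤ (n₁ : ℤ) ∧ 0 ≤ a.2 ∧ a.2 ≤ (n₂ : ℤ)) → P a = 0)
    (hfact : ∀ d : ℤ × ℤ,
      Q d = ∑ a ∈ Finset.range (n₁ + 1) ×ˢ Finset.range (n₂ + 1),
        (P ((a.1 : ℤ), (a.2 : ℤ))).adjoint ∘L P ((a.1 : ℤ) + d.1, (a.2 : ℤ) + d.2))
    (houter₀ : OuterCond2 P (Finset.range n₁ ×ˢ Finset.range n₂))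
    (houter₁ : OuterCond2 P (Finset.range n₁ ×ˢ Finset.range (n₂ + 1)))
    (houter₂ : OuterCond2 P (Finset.range (n₁ + 1) ×ˢ Finset.range n₂))
    (houter₃ : OuterCond2 P
      ((Finset.range (n₁ + 1) ×ˢ Finset.range (n₂ + 1)).erase (n₁, n₂)))
    (S1 S2 S0 SKn : ℕ × ℕ → ℕ × ℕ → H →L[ℂ] H)
    (hS1 : IsSchurToep2 Q (Finset.range n₁ ×ˢ Finset.range (n₂ + 1)) S1)
    (hS2 : IsSchurToep2 Q (Finset.range (n₁ + 1) ×ˢ Finset.range n₂) S2)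
    (hS0 : IsSchurToep2 Q (Finset.range n₁ ×ˢ Finset.range n₂) S0)
    (hSKn : IsSchurToep2 Q
      ((Finset.range (n₁ + 1) ×ˢ Finset.range (n₂ + 1)).erase (n₁, n₂)) SKn) :
    ∀ a b : ℕ × ℕ, SKn a b = S1 a b + S2 a b - S0 a b := by
  have hunion : range n₁ ×ˢ range (n₂ + 1) ∪ range (n₁ + 1) ×ˢ range n₂ =
      (range (n₁ + 1) ×ˢ range (n₂ + 1)).erase (n₁, n₂) := by
    ext p
    simp only [mem_union, mem_erase, mem_product, mem_range, ne_eq, Prod.ext_iff]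
    omega
  have hinter : range n₁ ×ˢ range (n₂ + 1) ∩ range (n₁ + 1) ×ˢ range n₂ =
      range n₁ ×ˢ range n₂ := by
    ext p
    simp only [mem_inter, mem_product, mem_range]
    omega
  rw [← hunion] at houter₃ hSKn
  rw [← hinter] at houter₀ hS0
  intro a b
  exact congrFun₂ (schurToep2_union_eq_add_sub_inter hPsupp hfact
    (isLowerSet_range_prod_range _ _) (isLowerSet_range_prod_range _ _)
    (product_subset_product (range_subset_range.2 n₁.le_succ) subset_rfl)
    (product_subset_product subset_rfl (range_subset_range.2 n₂.le_succ))
    houter₁ houter₂ houter₃ houter₀ hS1 hS2 hSKn hS0) a b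

/-- Two-variable Schur complement identity implied by an outer factorization:
`S(T_Q; K∖{(n₁,n₂)}) = S₁ + S₂ - S₀`. -/
theorem two_variable_schur_identity (n₁ n₂ : ℕ) (Q : ℤ × ℤ → H →L[ℂ] H)
    (hQ : ToepPos2 Q)
    (P : ℤ × ℤ → H →L[ℂ] H)
    (hPsupp : ∀ a : ℤ × ℤ,
      ¬(0 ≤ a.1 ∧ a.1 ≤ (n₁ : ℤ) ∧ 0 ≤ a.2 ∧ a.2 ≤ (n₂ : ℤ)) → P a = 0)
    (hfact : ∀ d : ℤ × ℤ,
      Q d = ∑ a ∈ Finset.range (n₁ + 1) ×ˢ Finset.range (n₂ + 1),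
        (P ((a.1 : ℤ), (a.2 : ℤ))).adjoint ∘L P ((a.1 : ℤ) + d.1, (a.2 : ℤ) + d.2))
    (houter₀ : OuterCond2 P (Finset.range n₁ ×ˢ Finset.range n₂))
    (houter₁ : OuterCond2 P (Finset.range n₁ ×ˢ Finset.range (n₂ + 1)))
    (houter₂ : OuterCond2 P (Finset.range (n₁ + 1) ×ˢ Finset.range n₂))
    (houter₃ : OuterCond2 P
      ((Finset.range (n₁ + 1) ×ˢ Finset.range (n₂ + 1)).erase (n₁, n₂)))
    (houter₄ : OuterCond2 P (Finset.range (n₁ + 1) ×ˢ Finset.range (n₂ + 1)))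
    (S1 S2 S0 SKn : ℕ × ℕ → ℕ × ℕ → H →L[ℂ] H)
    (hS1 : IsSchurToep2 Q (Finset.range n₁ ×ˢ Finset.range (n₂ + 1)) S1)
    (hS2 : IsSchurToep2 Q (Finset.range (n₁ + 1) ×ˢ Finset.range n₂) S2)
    (hS0 : IsSchurToep2 Q (Finset.range n₁ ×ˢ Finset.range n₂) S0)
    (hSKn : IsSchurToep2 Q
      ((Finset.range (n₁ + 1) ×ˢ Finset.range (n₂ + 1)).erase (n₁, n₂)) SKn) :
    ∀ a b : ℕ × ℕ, SKn a b = S1 a b + S2 a b - S0 a b :=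
  two_variable_schur_identity_general n₁ n₂ Q P hPsupp hfact houter₀ houter₁ houter₂ houter₃ S1 S2
    S0 SKn hS1 hS2 hS0 hSKn

end
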